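/- Let (E,e) be a matrix factorization of w over S with a connection ∇, θ = [∇,e], and let ∧ : Ω^{⊗q} → ⋀^q Ω denote the canonical quotient to the exterior power over S. Set Φ_q = (1/q!)·(∧ ⊗ 1_E) ∘ θ^q : E → ⋀^qΩ ⊗_S E, with Φ_{−1} = 0. Then for every q ≥ 0 and every x ∈ E, dw ∧ Φ_{q−1}(x) + (−1)^q (1_{⋀^qΩ} ⊗ e)(Φ_q(x)) = Φ_q(e(x)). Equivalently, Φ = Σ_q Φ_q (the exponential exp(at(E)) = Σ [∇,e]^q/q! of the Atiyah class) is a closed degree-0 morphism of w-curved modules from E to Ω_{dw} ⊗ E, where Ω_{dw} ⊗ E = (⊕_q ⋀^qΩ) ⊗_S E carries the curved differential (dw ∧ −) ⊗ 1 + γ ⊗ e with γ = (−1)^q on ⋀^qΩ. -/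

import Mathlib

/-!
Write `ε = 1 ⊗ e` and let `T` be right multiplication by `θ` on `⋀Ω ⊗ E`, so that
`Φ_q x = T^q (1 ⊗ x) / q!`. The Leibniz rule and `e² = w` give `θ e + ε θ = dw ⊗ -`, hence
`T ε + ε T = (- ∧ dw)`; right multiplication by `dw` anticommutes with `T` and left multiplication
commutes with it. In the endomorphism ring this yields by induction
`Tⁿ⁺¹ ε = (n + 1) Tⁿ (- ∧ dw) + (-1)ⁿ⁺¹ ε Tⁿ⁺¹`, and evaluating at `1 ⊗ x`, where left and right
multiplication by `dw` agree, and dividing by `(n + 1)!` gives the identities.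
-/

set_option maxHeartbeats 1000000

open scoped TensorProduct
open PiTensorProduct

/-- The odd differential `e(x₀, x₁) = (e₁ x₁, e₀ x₀)` of a matrix factorization on the
total module `E₀ × E₁`. -/
noncomputable def mfDiff {S E₀ E₁ : Type*} [CommRing S]
    [AddCommGroup E₀] [AddCommGroup E₁] [Module S E₀] [Module S E₁]
    (e₀ : E₀ →ₗ[S] E₁) (e₁ : E₁ →ₗ[S] E₀) : (E₀ × E₁) →ₗ[S] (E₀ × E₁) :=
  LinearMap.prod (e₁ ∘ₗ LinearMap.snd S E₀ E₁) (e₀ ∘ₗ LinearMap.fst S E₀ E₁)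

/-- A pair of connections on the graded components assembled on the total module. -/
noncomputable def connPair {k S E₀ E₁ : Type*} [Field k] [CommRing S] [Algebra k S]
    [AddCommGroup E₀] [AddCommGroup E₁] [Module S E₀] [Module S E₁]
    [Module k E₀] [Module k E₁] [IsScalarTower k S E₀] [IsScalarTower k S E₁]
    (na₀ : E₀ →ₗ[k] (Ω[S⁄k] ⊗[S] E₀)) (na₁ : E₁ →ₗ[k] (Ω[S⁄k] ⊗[S] E₁)) :
    (E₀ × E₁) → (Ω[S⁄k] ⊗[S] (E₀ × E₁)) :=
  fun x => (LinearMap.lTensor (Ω[S⁄k]) (LinearMap.inl S E₀ E₁)) (na₀ x.1)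
    + (LinearMap.lTensor (Ω[S⁄k]) (LinearMap.inr S E₀ E₁)) (na₁ x.2)

theorem mul_pow_eq_of_anticomm {R A : Type*} [CommRing R] [Ring A] [Algebra R A]
    {t r : A} (hr : r * t = -(t * r)) (n : ℕ) :
    r * t ^ n = (-1 : R) ^ n • (t ^ n * r) := by
  induction n with
  | zero => simp
  | succ n ih =>
    rw [pow_succ t, ← mul_assoc, ih, smul_mul_assoc, mul_assoc, hr, mul_neg, ← mul_assoc]
    module

theorem pow_succ_mul_eq_of_anticomm {R A : Type*} [CommRing R] [Ring A] [Algebra R A]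
    {t ε r : A} (hε : t * ε + ε * t = r) (hr : r * t = -(t * r)) (n : ℕ) :
    t ^ (n + 1) * ε = (n + 1 : R) • (t ^ n * r) + (-1 : R) ^ (n + 1) • (ε * t ^ (n + 1)) := by
  induction n with
  | zero => simpa [sub_eq_add_neg] using eq_sub_of_add_eq hε
  | succ n ih =>
    have hsq : (-1 : R) ^ (n + 1) * (-1) ^ (n + 1) = 1 := by rw [← mul_pow]; simp
    have htε : t * ε = r - ε * t := eq_sub_of_add_eq hε
    calc t ^ (n + 1 + 1) * ε = t * (t ^ (n + 1) * ε) := by rw [pow_succ', mul_assoc]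
      _ = (n + 1 : R) • (t ^ (n + 1) * r) + (-1 : R) ^ (n + 1) • (r * t ^ (n + 1))
            + (-1 : R) ^ (n + 1 + 1) • (ε * t ^ (n + 1 + 1)) := by
        rw [ih, mul_add, mul_smul_comm, mul_smul_comm, ← mul_assoc, ← mul_assoc, htε,
          sub_mul, mul_assoc ε, ← pow_succ', ← pow_succ']
        module
      _ = _ := by
        rw [mul_pow_eq_of_anticomm (R := R) hr, smul_smul, hsq]
        push_cast
        module

namespace ExteriorAlgebra

theorem ιMulti_snoc {R M : Type*} [CommRing R] [AddCommGroup M] [Module R M]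
    (q : ℕ) (ω : Fin q → M) (μ : M) :
    ιMulti R (q + 1) (Fin.snoc ω μ) = ιMulti R q ω * ι R μ := by
  rw [ιMulti_apply, ιMulti_apply, List.ofFn_succ', List.concat_eq_append, List.prod_append,
    List.prod_singleton]
  simp

variable {R M E : Type*} [CommRing R] [AddCommGroup M] [Module R M]
  [AddCommGroup E] [Module R E]

open LinearMap TensorProduct

noncomputable def wedgeMul :
    ExteriorAlgebra R M ⊗[R] (M ⊗[R] E) →ₗ[R] ExteriorAlgebra R M ⊗[R] E :=
  rTensor E (mul' R _) ∘ₗ (TensorProduct.assoc R _ _ E).symm.toLinearMap ∘ₗ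
    lTensor _ (rTensor E (ι R))

@[simp]
theorem wedgeMul_tmul (l : ExteriorAlgebra R M) (μ : M) (y : E) :
    wedgeMul (l ⊗ₜ[R] (μ ⊗ₜ[R] y)) = (l * ι R μ) ⊗ₜ[R] y := by
  simp [wedgeMul]

theorem wedgeMul_comp_rTensor_mulLeft (a : ExteriorAlgebra R M) :
    wedgeMul ∘ₗ rTensor (M ⊗[R] E) (mulLeft R a) = rTensor E (mulLeft R a) ∘ₗ wedgeMul := by
  refine ext_threefold' fun l μ y => ?_
  simp [mul_assoc]

theorem rTensor_mulRight_ι_comp_wedgeMul (m : M) :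
    rTensor E (mulRight R (ι R m)) ∘ₗ wedgeMul =
      -(wedgeMul ∘ₗ rTensor (M ⊗[R] E) (mulRight R (ι R m))) := by
  refine ext_threefold' fun l μ y => ?_
  have hswap : ι R m * ι R μ = -(ι R μ * ι R m) :=
    eq_neg_of_add_eq_zero_left (ι_add_mul_swap m μ)
  simp [mul_assoc, hswap, neg_tmul]

theorem wedgeMul_comp_lTensor_lTensor (e : E →ₗ[R] E) :
    wedgeMul ∘ₗ lTensor _ (lTensor M e) = lTensor (ExteriorAlgebra R M) e ∘ₗ wedgeMul := by
  refine ext_threefold' fun l μ y => ?_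
  simp

theorem wedgeMul_comp_lTensor_mk (m : M) :
    wedgeMul ∘ₗ lTensor (ExteriorAlgebra R M) (TensorProduct.mk R M E m) =
      rTensor E (mulRight R (ι R m)) := by
  refine TensorProduct.ext' fun l y => ?_
  simp

noncomputable def wedgeRight (θ : E →ₗ[R] M ⊗[R] E) :
    Module.End R (ExteriorAlgebra R M ⊗[R] E) :=
  wedgeMul ∘ₗ lTensor _ θ

section

variable (θ : E →ₗ[R] M ⊗[R] E)

theorem commute_wedgeRight_rTensor_mulLeft (a : ExteriorAlgebra R M) :
    Commute (wedgeRight θ) (rTensor E (mulLeft R a)) := by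
  rw [Commute, SemiconjBy, Module.End.mul_eq_comp, Module.End.mul_eq_comp, wedgeRight,
    comp_assoc, lTensor_comp_rTensor, ← rTensor_comp_lTensor, ← comp_assoc,
    wedgeMul_comp_rTensor_mulLeft, comp_assoc]

theorem rTensor_mulRight_ι_mul_wedgeRight (m : M) :
    rTensor E (mulRight R (ι R m)) * wedgeRight θ =
      -(wedgeRight θ * rTensor E (mulRight R (ι R m))) := by
  rw [Module.End.mul_eq_comp, Module.End.mul_eq_comp, wedgeRight, ← comp_assoc,
    rTensor_mulRight_ι_comp_wedgeMul, neg_comp, comp_assoc, rTensor_comp_lTensor,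
    ← lTensor_comp_rTensor, comp_assoc]

theorem wedgeRight_mul_lTensor_add {e : E →ₗ[R] E} {m : M}
    (hθ : θ ∘ₗ e + lTensor M e ∘ₗ θ = TensorProduct.mk R M E m) :
    wedgeRight θ * lTensor _ e + lTensor _ e * wedgeRight θ =
      rTensor E (mulRight R (ι R m)) := by
  rw [Module.End.mul_eq_comp, Module.End.mul_eq_comp, wedgeRight, comp_assoc,
    ← comp_assoc _ _ (lTensor _ e), ← wedgeMul_comp_lTensor_lTensor, comp_assoc, ← lTensor_comp,
    ← lTensor_comp, ← comp_add, ← lTensor_add, hθ, wedgeMul_comp_lTensor_mk]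

end

theorem wedgeRight_pow_succ_one_tmul {θ : E →ₗ[R] M ⊗[R] E} {e : E →ₗ[R] E} {m : M}
    (hθ : θ ∘ₗ e + lTensor M e ∘ₗ θ = TensorProduct.mk R M E m) (n : ℕ) (x : E) :
    (wedgeRight θ ^ (n + 1)) (1 ⊗ₜ[R] e x) =
      (n + 1 : R) • rTensor E (mulLeft R (ι R m)) ((wedgeRight θ ^ n) (1 ⊗ₜ[R] x))
        + (-1 : R) ^ (n + 1) • lTensor _ e ((wedgeRight θ ^ (n + 1)) (1 ⊗ₜ[R] x)) := by
  have key := LinearMap.congr_fun (pow_succ_mul_eq_of_anticomm (R := R)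
    (A := Module.End R (ExteriorAlgebra R M ⊗[R] E))
    (wedgeRight_mul_lTensor_add θ hθ) (rTensor_mulRight_ι_mul_wedgeRight θ m) n) (1 ⊗ₜ[R] x)
  have hLR : rTensor E (mulRight R (ι R m)) (1 ⊗ₜ[R] x) =
      rTensor E (mulLeft R (ι R m)) (1 ⊗ₜ[R] x) := by simp
  simp only [Module.End.mul_apply, LinearMap.add_apply, LinearMap.smul_apply,
    lTensor_tmul, hLR] at key
  rw [key, ← Module.End.mul_apply, ((commute_wedgeRight_rTensor_mulLeft θ _).pow_left n).eq,
    Module.End.mul_apply]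

theorem rTensor_comp_eq_wedgeRight_pow {θ : E →ₗ[R] M ⊗[R] E}
    {app : ∀ q : ℕ, ((⨂[R] (_ : Fin q), M) ⊗[R] (M ⊗[R] E)) →ₗ[R]
      ((⨂[R] (_ : Fin (q + 1)), M) ⊗[R] E)}
    (happ : ∀ (q : ℕ) (ω : Fin q → M) (μ : M) (x : E),
      app q (tprod R ω ⊗ₜ[R] (μ ⊗ₜ[R] x)) =
        PiTensorProduct.tprod R (Fin.snoc ω μ) ⊗ₜ[R] x)
    {Θ : ∀ q : ℕ, E →ₗ[R] ((⨂[R] (_ : Fin q), M) ⊗[R] E)}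
    (hΘ₀ : ∀ x : E, Θ 0 x = PiTensorProduct.tprod R (fun i : Fin 0 => i.elim0) ⊗ₜ[R] x)
    (hΘs : ∀ q : ℕ, Θ (q + 1) = app q ∘ₗ lTensor (⨂[R] (_ : Fin q), M) θ ∘ₗ Θ q)
    {wedge : ∀ q : ℕ, (⨂[R] (_ : Fin q), M) →ₗ[R] ExteriorAlgebra R M}
    (hwedge : ∀ (q : ℕ) (ω : Fin q → M), wedge q (tprod R ω) = ιMulti R q ω) (q : ℕ) :
    rTensor E (wedge q) ∘ₗ Θ q = (wedgeRight θ ^ q) ∘ₗ TensorProduct.mk R _ E 1 := by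
  induction q with
  | zero =>
    ext x
    simp [hΘ₀, hwedge]
  | succ q ih =>
    have happ' : rTensor E (wedge (q + 1)) ∘ₗ app q =
        wedgeMul ∘ₗ rTensor (M ⊗[R] E) (wedge q) := by
      refine TensorProduct.ext (PiTensorProduct.ext (MultilinearMap.ext fun ω => ?_))
      refine TensorProduct.ext' fun μ y => ?_
      simp [happ, hwedge, -ιMulti_succ_apply, ιMulti_snoc]
    rw [hΘs, ← comp_assoc, happ', comp_assoc, ← comp_assoc _ (lTensor _ θ), rTensor_comp_lTensor,
      ← lTensor_comp_rTensor, comp_assoc, ih, pow_succ', Module.End.mul_eq_comp, wedgeRight,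
      comp_assoc, comp_assoc]

end ExteriorAlgebra

theorem comp_add_lTensor_comp_eq_mk_of_leibniz {R M E : Type*} [CommRing R]
    [AddCommGroup M] [Module R M] [AddCommGroup E] [Module R E] (d : R → M)
    {nabla : E → M ⊗[R] E}
    (hnabla : ∀ (a : R) (x : E), nabla (a • x) = d a ⊗ₜ[R] x + a • nabla x)
    {e : E →ₗ[R] E} {w : R} (he : e ∘ₗ e = w • LinearMap.id)
    {θ : E →ₗ[R] M ⊗[R] E} (hθ : ∀ x, θ x = nabla (e x) - LinearMap.lTensor M e (nabla x)) :
    θ ∘ₗ e + LinearMap.lTensor M e ∘ₗ θ = TensorProduct.mk R M E (d w) := by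
  have hee : ∀ x, e (e x) = w • x := fun x => LinearMap.congr_fun he x
  have hee' : ∀ y, LinearMap.lTensor M e (LinearMap.lTensor M e y) = w • y := fun y => by
    rw [← LinearMap.comp_apply, ← LinearMap.lTensor_comp, he, LinearMap.lTensor_smul,
      LinearMap.lTensor_id, LinearMap.smul_apply, LinearMap.id_apply]
  ext x
  simp only [LinearMap.add_apply, LinearMap.comp_apply, hθ, map_sub, hee, hee', hnabla,
    TensorProduct.mk_apply]
  abel

section MatrixFactorization

variable {k S E₀ E₁ : Type*} [Field k] [CommRing S] [Algebra k S]
  [AddCommGroup E₀] [AddCommGroup E₁] [Module S E₀] [Module S E₁]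

theorem mfDiff_comp_mfDiff {w : S} {e₀ : E₀ →ₗ[S] E₁} {e₁ : E₁ →ₗ[S] E₀}
    (he₀ : e₁ ∘ₗ e₀ = w • LinearMap.id) (he₁ : e₀ ∘ₗ e₁ = w • LinearMap.id) :
    mfDiff e₀ e₁ ∘ₗ mfDiff e₀ e₁ = w • LinearMap.id := by
  ext x <;> simp [mfDiff, ← LinearMap.comp_apply, he₀, he₁]

variable [Module k E₀] [Module k E₁] [IsScalarTower k S E₀] [IsScalarTower k S E₁]

theorem connPair_smul {na₀ : E₀ →ₗ[k] (Ω[S⁄k] ⊗[S] E₀)} {na₁ : E₁ →ₗ[k] (Ω[S⁄k] ⊗[S] E₁)}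
    (hna₀ : ∀ (a : S) (x : E₀), na₀ (a • x) = KaehlerDifferential.D k S a ⊗ₜ[S] x + a • na₀ x)
    (hna₁ : ∀ (a : S) (x : E₁), na₁ (a • x) = KaehlerDifferential.D k S a ⊗ₜ[S] x + a • na₁ x)
    (a : S) (x : E₀ × E₁) :
    connPair na₀ na₁ (a • x) =
      KaehlerDifferential.D k S a ⊗ₜ[S] x + a • connPair na₀ na₁ x := by
  have hsplit : KaehlerDifferential.D k S a ⊗ₜ[S] x =
      KaehlerDifferential.D k S a ⊗ₜ[S] (x.1, 0) + KaehlerDifferential.D k S a ⊗ₜ[S] (0, x.2) := by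
    rw [← TensorProduct.tmul_add, Prod.fst_add_snd]
  rw [hsplit]
  simp only [connPair, Prod.smul_fst, Prod.smul_snd, hna₀, hna₁, map_add, map_smul,
    LinearMap.lTensor_tmul, LinearMap.inl_apply, LinearMap.inr_apply, smul_add]
  abel

end MatrixFactorization

theorem algebraMap_inv_factorial_succ_mul {k S : Type*} [Field k] [CharZero k] [CommRing S]
    [Algebra k S] (q : ℕ) :
    algebraMap k S ((q + 1).factorial : k)⁻¹ * (q + 1 : S) =
      algebraMap k S (q.factorial : k)⁻¹ := by
  rw [show (q + 1 : S) = algebraMap k S (q + 1) by simp, ← map_mul, Nat.factorial_succ]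
  congr 1
  push_cast
  field_simp

theorem stmt_13_general {k : Type*} [Field k] [CharZero k]
    {S : Type*} [CommRing S] [Algebra k S] (w : S)
    {E₀ E₁ : Type*} [AddCommGroup E₀] [AddCommGroup E₁]
    [Module S E₀] [Module S E₁] [Module k E₀] [Module k E₁]
    [IsScalarTower k S E₀] [IsScalarTower k S E₁]
    (e₀ : E₀ →ₗ[S] E₁) (e₁ : E₁ →ₗ[S] E₀)
    (he₀ : e₁ ∘ₗ e₀ = w • (LinearMap.id : E₀ →ₗ[S] E₀))
    (he₁ : e₀ ∘ₗ e₁ = w • (LinearMap.id : E₁ →ₗ[S] E₁))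
    (na₀ : E₀ →ₗ[k] (Ω[S⁄k] ⊗[S] E₀)) (na₁ : E₁ →ₗ[k] (Ω[S⁄k] ⊗[S] E₁))
    (hna₀ : ∀ (a : S) (x : E₀),
      na₀ (a • x) = (KaehlerDifferential.D k S a) ⊗ₜ[S] x + a • na₀ x)
    (hna₁ : ∀ (a : S) (x : E₁),
      na₁ (a • x) = (KaehlerDifferential.D k S a) ⊗ₜ[S] x + a • na₁ x)
    (θ : (E₀ × E₁) →ₗ[S] (Ω[S⁄k] ⊗[S] (E₀ × E₁)))
    (hθ : ∀ x : E₀ × E₁,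
      θ x = connPair na₀ na₁ (mfDiff e₀ e₁ x)
        - (LinearMap.lTensor (Ω[S⁄k]) (mfDiff e₀ e₁)) (connPair na₀ na₁ x))
    (app : ∀ q : ℕ,
      ((⨂[S] (_ : Fin q), Ω[S⁄k]) ⊗[S] (Ω[S⁄k] ⊗[S] (E₀ × E₁))) →ₗ[S]
        ((⨂[S] (_ : Fin (q + 1)), Ω[S⁄k]) ⊗[S] (E₀ × E₁)))
    (happ : ∀ (q : ℕ) (ω : Fin q → Ω[S⁄k]) (μ : Ω[S⁄k]) (x : E₀ × E₁),
      app q ((tprod S ω) ⊗ₜ[S] (μ ⊗ₜ[S] x)) = (PiTensorProduct.tprod S (Fin.snoc ω μ)) ⊗ₜ[S] x)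
    (Θ : ∀ q : ℕ, (E₀ × E₁) →ₗ[S] ((⨂[S] (_ : Fin q), Ω[S⁄k]) ⊗[S] (E₀ × E₁)))
    (hΘ₀ : ∀ x : E₀ × E₁, Θ 0 x = (PiTensorProduct.tprod S (fun i : Fin 0 => i.elim0)) ⊗ₜ[S] x)
    (hΘs : ∀ q : ℕ,
      Θ (q + 1) = app q ∘ₗ (LinearMap.lTensor (⨂[S] (_ : Fin q), Ω[S⁄k]) θ) ∘ₗ Θ q)
    (wedge : ∀ q : ℕ,
      (⨂[S] (_ : Fin q), Ω[S⁄k]) →ₗ[S] ExteriorAlgebra S (Ω[S⁄k]))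
    (hwedge : ∀ (q : ℕ) (ω : Fin q → Ω[S⁄k]),
      wedge q (tprod S ω) = ExteriorAlgebra.ιMulti S q ω)
    (Φ : ∀ q : ℕ, (E₀ × E₁) →ₗ[S] (ExteriorAlgebra S (Ω[S⁄k]) ⊗[S] (E₀ × E₁)))
    (hΦ : ∀ q : ℕ,
      Φ q = (algebraMap k S ((q.factorial : k)⁻¹)) •
        ((TensorProduct.map (wedge q) LinearMap.id) ∘ₗ Θ q)) :
    (∀ x : E₀ × E₁,
      (LinearMap.lTensor (ExteriorAlgebra S (Ω[S⁄k])) (mfDiff e₀ e₁)) (Φ 0 x)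
        = Φ 0 (mfDiff e₀ e₁ x)) ∧
    (∀ (q : ℕ) (x : E₀ × E₁),
      (LinearMap.rTensor (E₀ × E₁)
          (LinearMap.mulLeft S (ExteriorAlgebra.ι S (KaehlerDifferential.D k S w)))) (Φ q x)
        + ((-1 : S) ^ (q + 1)) •
            (LinearMap.lTensor (ExteriorAlgebra S (Ω[S⁄k])) (mfDiff e₀ e₁)) (Φ (q + 1) x)
        = Φ (q + 1) (mfDiff e₀ e₁ x)) := by
  have hθe := comp_add_lTensor_comp_eq_mk_of_leibniz (KaehlerDifferential.D k S)
    (connPair_smul hna₀ hna₁) (mfDiff_comp_mfDiff he₀ he₁) hθ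
  have hΦT : ∀ q x, Φ q x =
      algebraMap k S (q.factorial : k)⁻¹ • (ExteriorAlgebra.wedgeRight θ ^ q) (1 ⊗ₜ[S] x) := by
    intro q x
    rw [hΦ, LinearMap.smul_apply]
    exact congrArg _ (LinearMap.congr_fun
      (ExteriorAlgebra.rTensor_comp_eq_wedgeRight_pow happ hΘ₀ hΘs hwedge q) x)
  refine ⟨fun x => ?_, fun q x => ?_⟩
  · simp [hΦT]
  · rw [hΦT, hΦT, hΦT, ExteriorAlgebra.wedgeRight_pow_succ_one_tmul hθe, smul_add, smul_smul,
      map_smul, map_smul, smul_smul, smul_smul, algebraMap_inv_factorial_succ_mul, mul_comm]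

/-- Let `(E, e)` be a matrix factorization of `w` with connection `∇`,
`θ = [∇, e]`, and `Φ_q = (1/q!)·(∧ ⊗ 1) ∘ θ^q` (with `Φ_{-1} = 0`), where `∧` is the
canonical antisymmetrization `Ω^{⊗q} → ⋀^q Ω` (valued in the exterior algebra of `Ω`).
Then for every `q ≥ 0`, `dw ∧ Φ_{q-1}(x) + (−1)^q (1 ⊗ e)(Φ_q x) = Φ_q (e x)`;
i.e. `exp(at(E)) = Σ_q [∇,e]^q / q!` is a closed degree-0 morphism of `w`-curved modules
`E → Ω_{dw} ⊗ E`.  (Stated below separately for `q = 0` and for `q + 1`.) -/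
theorem stmt_13 {k : Type*} [Field k] [CharZero k]
    {S : Type*} [CommRing S] [Algebra k S] (w : S)
    {E₀ E₁ : Type*} [AddCommGroup E₀] [AddCommGroup E₁]
    [Module S E₀] [Module S E₁] [Module k E₀] [Module k E₁]
    [IsScalarTower k S E₀] [IsScalarTower k S E₁]
    [Module.Free S E₀] [Module.Finite S E₀] [Module.Free S E₁] [Module.Finite S E₁]
    (e₀ : E₀ →ₗ[S] E₁) (e₁ : E₁ →ₗ[S] E₀)
    (he₀ : e₁ ∘ₗ e₀ = w • (LinearMap.id : E₀ →ₗ[S] E₀))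
    (he₁ : e₀ ∘ₗ e₁ = w • (LinearMap.id : E₁ →ₗ[S] E₁))
    (na₀ : E₀ →ₗ[k] (Ω[S⁄k] ⊗[S] E₀)) (na₁ : E₁ →ₗ[k] (Ω[S⁄k] ⊗[S] E₁))
    (hna₀ : ∀ (a : S) (x : E₀),
      na₀ (a • x) = (KaehlerDifferential.D k S a) ⊗ₜ[S] x + a • na₀ x)
    (hna₁ : ∀ (a : S) (x : E₁),
      na₁ (a • x) = (KaehlerDifferential.D k S a) ⊗ₜ[S] x + a • na₁ x)
    (θ : (E₀ × E₁) →ₗ[S] (Ω[S⁄k] ⊗[S] (E₀ × E₁)))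
    (hθ : ∀ x : E₀ × E₁,
      θ x = connPair na₀ na₁ (mfDiff e₀ e₁ x)
        - (LinearMap.lTensor (Ω[S⁄k]) (mfDiff e₀ e₁)) (connPair na₀ na₁ x))
    (app : ∀ q : ℕ,
      ((⨂[S] (_ : Fin q), Ω[S⁄k]) ⊗[S] (Ω[S⁄k] ⊗[S] (E₀ × E₁))) →ₗ[S]
        ((⨂[S] (_ : Fin (q + 1)), Ω[S⁄k]) ⊗[S] (E₀ × E₁)))
    (happ : ∀ (q : ℕ) (ω : Fin q → Ω[S⁄k]) (μ : Ω[S⁄k]) (x : E₀ × E₁),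
      app q ((tprod S ω) ⊗ₜ[S] (μ ⊗ₜ[S] x)) = (PiTensorProduct.tprod S (Fin.snoc ω μ)) ⊗ₜ[S] x)
    (Θ : ∀ q : ℕ, (E₀ × E₁) →ₗ[S] ((⨂[S] (_ : Fin q), Ω[S⁄k]) ⊗[S] (E₀ × E₁)))
    (hΘ₀ : ∀ x : E₀ × E₁, Θ 0 x = (PiTensorProduct.tprod S (fun i : Fin 0 => i.elim0)) ⊗ₜ[S] x)
    (hΘs : ∀ q : ℕ,
      Θ (q + 1) = app q ∘ₗ (LinearMap.lTensor (⨂[S] (_ : Fin q), Ω[S⁄k]) θ) ∘ₗ Θ q)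
    (wedge : ∀ q : ℕ,
      (⨂[S] (_ : Fin q), Ω[S⁄k]) →ₗ[S] ExteriorAlgebra S (Ω[S⁄k]))
    (hwedge : ∀ (q : ℕ) (ω : Fin q → Ω[S⁄k]),
      wedge q (tprod S ω) = ExteriorAlgebra.ιMulti S q ω)
    (Φ : ∀ q : ℕ, (E₀ × E₁) →ₗ[S] (ExteriorAlgebra S (Ω[S⁄k]) ⊗[S] (E₀ × E₁)))
    (hΦ : ∀ q : ℕ,
      Φ q = (algebraMap k S ((q.factorial : k)⁻¹)) •
        ((TensorProduct.map (wedge q) LinearMap.id) ∘ₗ Θ q)) :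
    (∀ x : E₀ × E₁,
      (LinearMap.lTensor (ExteriorAlgebra S (Ω[S⁄k])) (mfDiff e₀ e₁)) (Φ 0 x)
        = Φ 0 (mfDiff e₀ e₁ x)) ∧
    (∀ (q : ℕ) (x : E₀ × E₁),
      (LinearMap.rTensor (E₀ × E₁)
          (LinearMap.mulLeft S (ExteriorAlgebra.ι S (KaehlerDifferential.D k S w)))) (Φ q x)
        + ((-1 : S) ^ (q + 1)) •
            (LinearMap.lTensor (ExteriorAlgebra S (Ω[S⁄k])) (mfDiff e₀ e₁)) (Φ (q + 1) x)
        = Φ (q + 1) (mfDiff e₀ e₁ x)) :=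
  stmt_13_general w e₀ e₁ he₀ he₁ na₀ na₁ hna₀ hna₁ θ hθ app happ Θ hΘ₀ hΘs wedge hwedge Φ hΦ
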